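/- Let $S \subseteq \mathbb{P}^m(\mathbb{F}_q)$ be a set of points and let $a$ be the maximum over all $\mathbb{F}_q$-rational hyperplanes $\Pi$ of $|S \cap \Pi|$. Then $|S| \le aq + 1$. -/

import Mathlib

/-- An `𝔽_q`-rational hyperplane in `ℙ^m`, viewed as a set of points of
`ℙ^m(𝔽_q) = Projectivization F (Fin (m+1) → F)`. -/
def IsProjHyperplane {F : Type*} [Field F] {m : ℕ}
    (H : Set (Projectivization F (Fin (m + 1) → F))) : Prop :=
  ∃ φ : (Fin (m + 1) → F) →ₗ[F] F, φ ≠ 0 ∧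
    H = {p | p.submodule ≤ LinearMap.ker φ}

private lemma natCard_vs {F : Type*} [Field F] [Fintype F]
    (W : Type*) [AddCommGroup W] [Module F W] [FiniteDimensional F W] :
    Nat.card W = Fintype.card F ^ Module.finrank F W := by
  haveI : Finite W := Module.finite_of_finite F
  haveI : Fintype W := Fintype.ofFinite W
  rw [Nat.card_eq_fintype_card]
  exact Module.card_eq_pow_finrank

/-- The number of nonzero vectors in the kernel of a nonzero functional. -/
private lemma card_ker_ne {F : Type*} [Field F] [Fintype F]
    (W : Type*) [AddCommGroup W] [Module F W] [FiniteDimensional F W]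
    (ψ : W →ₗ[F] F) (hψ : ψ ≠ 0) :
    Nat.card {w : W // ψ w = 0 ∧ w ≠ 0} =
      Fintype.card F ^ (Module.finrank F W - 1) - 1 := by
  classical
  haveI : Finite W := Module.finite_of_finite F
  haveI : Fintype W := Fintype.ofFinite W
  obtain ⟨w0, hw0⟩ : ∃ w, ψ w ≠ 0 := by
    by_contra h
    push_neg at h
    exact hψ (LinearMap.ext fun w => by simp [h w])
  have hsurj : Function.Surjective ψ := fun c =>
    ⟨(c * (ψ w0)⁻¹) • w0, by rw [map_smul, smul_eq_mul]; field_simp⟩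
  have hrange : LinearMap.range ψ = ⊤ := LinearMap.range_eq_top.2 hsurj
  have hk : Module.finrank F (LinearMap.ker ψ) = Module.finrank F W - 1 := by
    have h1 := LinearMap.finrank_range_add_finrank_ker ψ
    rw [hrange, finrank_top, Module.finrank_self] at h1
    omega
  have hcard : Nat.card (LinearMap.ker ψ) = Fintype.card F ^ (Module.finrank F W - 1) := by
    rw [natCard_vs (F := F), hk]
  haveI : Fintype (LinearMap.ker ψ) := Fintype.ofFinite _
  let e : {w : W // ψ w = 0 ∧ w ≠ 0} ≃ {x : LinearMap.ker ψ // ¬ (x = 0)} :=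
    { toFun := fun w => ⟨⟨w.1, LinearMap.mem_ker.2 w.2.1⟩, by
        simp only [ne_eq, Submodule.mk_eq_zero]
        exact w.2.2⟩
      invFun := fun x => ⟨x.1.1, ⟨LinearMap.mem_ker.1 x.1.2, by
        intro h
        exact x.2 (Subtype.ext h)⟩⟩
      left_inv := fun w => rfl
      right_inv := fun x => rfl }
  rw [Nat.card_congr e, Nat.card_eq_fintype_card, Fintype.card_subtype_compl,
    Fintype.card_subtype_eq, ← Nat.card_eq_fintype_card, hcard]

/-- Zanella's Lemma: if `a` is the maximum number of points of `S ⊆ ℙ^m(𝔽_q)` lying on an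
`𝔽_q`-rational hyperplane, then `|S| ≤ a q + 1`. -/
theorem zanella_lemma {F : Type*} [Field F] [Fintype F] (q m : ℕ)
    (hq : Fintype.card F = q) (hm : 1 ≤ m)
    (S : Set (Projectivization F (Fin (m + 1) → F))) (a : ℕ)
    (hmax : ∀ H, IsProjHyperplane H → (S ∩ H).ncard ≤ a)
    (hattain : ∃ H, IsProjHyperplane H ∧ (S ∩ H).ncard = a) :
    S.ncard ≤ a * q + 1 := by
  classical
  have hq2 : 2 ≤ q := hq ▸ Fintype.one_lt_card
  haveI : Finite ((Fin (m + 1) → F) →ₗ[F] F) :=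
    Finite.of_injective _ (DFunLike.coe_injective (F := (Fin (m + 1) → F) →ₗ[F] F))
  haveI : Finite (Projectivization F (Fin (m + 1) → F)) := Quotient.finite _
  haveI : Fintype (Projectivization F (Fin (m + 1) → F)) := Fintype.ofFinite _
  haveI : Fintype ((Fin (m + 1) → F) →ₗ[F] F) := Fintype.ofFinite _
  have hfinrankV : Module.finrank F (Fin (m + 1) → F) = m + 1 := Module.finrank_fin_fun F
  have hfinrankD : Module.finrank F ((Fin (m + 1) → F) →ₗ[F] F) = m + 1 := by
    rw [Module.finrank_linearMap, hfinrankV, Module.finrank_self, mul_one]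
  -- membership in hyperplane in terms of rep
  have hmem : ∀ (φ : (Fin (m + 1) → F) →ₗ[F] F) (p : Projectivization F (Fin (m + 1) → F)),
      p.submodule ≤ LinearMap.ker φ ↔ φ p.rep = 0 := by
    intro φ p
    rw [Projectivization.submodule_eq, Submodule.span_singleton_le_iff_mem,
      LinearMap.mem_ker]
  -- count of nonzero functionals vanishing at a given point
  have hKer : ∀ v : Fin (m + 1) → F, v ≠ 0 →
      (Finset.univ.filter
        (fun φ : (Fin (m + 1) → F) →ₗ[F] F => φ v = 0 ∧ φ ≠ 0)).card = q ^ m - 1 := by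
    intro v hv
    have hψ : (LinearMap.applyₗ (R := F) v : ((Fin (m + 1) → F) →ₗ[F] F) →ₗ[F] F) ≠ 0 := by
      obtain ⟨f, hf⟩ : ∃ f : (Fin (m + 1) → F) →ₗ[F] F, f v ≠ 0 := by
        by_contra h
        push_neg at h
        exact hv ((Module.forall_dual_apply_eq_zero_iff F v).1 h)
      intro h0
      apply hf
      have := congrArg (fun g => g f) h0
      simpa using this
    have hc := card_ker_ne ((Fin (m + 1) → F) →ₗ[F] F) (LinearMap.applyₗ (R := F) v) hψ
    rw [hfinrankD, Nat.add_sub_cancel, hq] at hc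
    rw [← Fintype.card_subtype, ← Nat.card_eq_fintype_card, ← hc]
    exact Nat.card_congr (Equiv.subtypeEquivRight fun φ => by
      exact Iff.rfl)
  -- the per-hyperplane bound in terms of rep
  have hHyp : ∀ φ : (Fin (m + 1) → F) →ₗ[F] F, φ ≠ 0 →
      (Finset.univ.filter
        (fun p : Projectivization F (Fin (m + 1) → F) => p ∈ S ∧ φ p.rep = 0)).card ≤ a := by
    intro φ hφ
    have hb := hmax {p | p.submodule ≤ LinearMap.ker φ} ⟨φ, hφ, rfl⟩
    have heq : (S ∩ {p | p.submodule ≤ LinearMap.ker φ}).ncard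
        = (Finset.univ.filter
          (fun p : Projectivization F (Fin (m + 1) → F) => p ∈ S ∧ φ p.rep = 0)).card := by
      rw [Set.ncard_eq_toFinset_card']
      congr 1
      ext p
      simp [Set.mem_toFinset, hmem φ p]
    omega
  -- double counting
  have hS : S.ncard = S.toFinset.card := Set.ncard_eq_toFinset_card' S
  set B : Finset (Projectivization F (Fin (m + 1) → F) × ((Fin (m + 1) → F) →ₗ[F] F)) :=
    Finset.univ.filter (fun x => x.1 ∈ S ∧ x.2 x.1.rep = 0 ∧ x.2 ≠ 0) with hB
  have count1 : B.card = S.toFinset.card * (q ^ m - 1) := by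
    rw [Finset.card_eq_sum_card_fiberwise (f := Prod.fst) (t := S.toFinset)
      (fun x hx => by
        simp only [Finset.mem_coe, hB, Finset.mem_filter, Finset.mem_univ, true_and] at hx
        simp only [Finset.mem_coe, Set.mem_toFinset]
        exact hx.1)]
    rw [Finset.sum_congr rfl (fun p hp => ?_), Finset.sum_const, smul_eq_mul]
    have hpS : p ∈ S := by simpa [Set.mem_toFinset] using hp
    rw [← hKer p.rep p.rep_nonzero]
    refine Finset.card_bij' (fun x _ => x.2) (fun φ _ => (p, φ)) ?_ ?_ ?_ ?_
    · intro x hx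
      simp only [hB, Finset.mem_filter, Finset.mem_univ, true_and] at hx
      obtain ⟨⟨_, h2, h3⟩, h4⟩ := hx
      subst h4
      simp only [Finset.mem_filter, Finset.mem_univ, true_and]
      exact ⟨h2, h3⟩
    · intro φ hφ
      simp only [Finset.mem_filter, Finset.mem_univ, true_and] at hφ
      simp only [hB, Finset.mem_filter, Finset.mem_univ, true_and]
      exact ⟨⟨hpS, hφ.1, hφ.2⟩, trivial⟩
    · intro x hx
      simp only [hB, Finset.mem_filter, Finset.mem_univ, true_and] at hx
      exact Prod.ext hx.2.symm rfl
    · intro φ hφ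
      rfl
  have hDnz : (Finset.univ.filter
      (fun φ : (Fin (m + 1) → F) →ₗ[F] F => φ ≠ 0)).card = q ^ (m + 1) - 1 := by
    rw [Finset.filter_ne', Finset.card_erase_of_mem (Finset.mem_univ 0), Finset.card_univ,
      ← Nat.card_eq_fintype_card, natCard_vs (F := F), hfinrankD, hq]
  have count2 : B.card ≤ (q ^ (m + 1) - 1) * a := by
    rw [Finset.card_eq_sum_card_fiberwise (f := Prod.snd)
      (t := Finset.univ.filter (fun φ : (Fin (m + 1) → F) →ₗ[F] F => φ ≠ 0))
      (fun x hx => by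
        simp only [Finset.mem_coe, hB, Finset.mem_filter, Finset.mem_univ, true_and] at hx ⊢
        exact hx.2.2)]
    calc ∑ φ ∈ Finset.univ.filter (fun φ : (Fin (m + 1) → F) →ₗ[F] F => φ ≠ 0),
          (B.filter (fun x => x.2 = φ)).card
        ≤ ∑ φ ∈ Finset.univ.filter (fun φ : (Fin (m + 1) → F) →ₗ[F] F => φ ≠ 0), a := by
          apply Finset.sum_le_sum
          intro φ hφ
          simp only [Finset.mem_filter, Finset.mem_univ, true_and] at hφ
          refine le_trans (le_of_eq ?_) (hHyp φ hφ)
          refine Finset.card_bij' (fun x _ => x.1) (fun p _ => (p, φ)) ?_ ?_ ?_ ?_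
          · intro x hx
            simp only [hB, Finset.mem_filter, Finset.mem_univ, true_and] at hx
            obtain ⟨⟨h1, h2, h3⟩, h4⟩ := hx
            subst h4
            simp only [Finset.mem_filter, Finset.mem_univ, true_and]
            exact ⟨h1, h2⟩
          · intro p hp
            simp only [Finset.mem_filter, Finset.mem_univ, true_and] at hp
            simp only [hB, Finset.mem_filter, Finset.mem_univ, true_and]
            exact ⟨⟨hp.1, hp.2, hφ⟩, trivial⟩
          · intro x hx
            simp only [hB, Finset.mem_filter, Finset.mem_univ, true_and] at hx
            exact Prod.ext rfl hx.2.symm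
          · intro p hp
            rfl
      _ = (q ^ (m + 1) - 1) * a := by rw [Finset.sum_const, smul_eq_mul, hDnz]
  -- the attained hyperplane gives a·(q-1) ≤ q^m - 1
  obtain ⟨H0, ⟨φ0, hφ0, rfl⟩, ha⟩ := hattain
  have haH : a ≤ Nat.card {p : Projectivization F (Fin (m + 1) → F) // φ0 p.rep = 0} := by
    rw [← ha]
    have h1 : (S ∩ {p | p.submodule ≤ LinearMap.ker φ0}).ncard
        ≤ ({p | p.submodule ≤ LinearMap.ker φ0} :
            Set (Projectivization F (Fin (m + 1) → F))).ncard :=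
      Set.ncard_le_ncard Set.inter_subset_right (Set.toFinite _)
    refine h1.trans (le_of_eq ?_)
    rw [← Nat.card_coe_set_eq]
    exact Nat.card_congr (Equiv.subtypeEquivRight fun p => by
      simpa using hmem φ0 p)
  have hinj : Nat.card {p : Projectivization F (Fin (m + 1) → F) // φ0 p.rep = 0} * (q - 1)
      ≤ q ^ m - 1 := by
    have hf : Function.Injective
        (fun x : {p : Projectivization F (Fin (m + 1) → F) // φ0 p.rep = 0} × Fˣ =>
          (⟨(x.2 : F) • x.1.1.rep,
            by rw [map_smul, x.1.2, smul_zero],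
            smul_ne_zero (Units.ne_zero _) x.1.1.rep_nonzero⟩ :
            {w : Fin (m + 1) → F // φ0 w = 0 ∧ w ≠ 0})) := by
      rintro ⟨⟨p, hp⟩, c⟩ ⟨⟨p', hp'⟩, d⟩ h
      simp only [Subtype.mk.injEq] at h
      have hpp' : p = p' := by
        conv_lhs => rw [← p.mk_rep]
        conv_rhs => rw [← p'.mk_rep]
        rw [Projectivization.mk_eq_mk_iff]
        refine ⟨c⁻¹ * d, ?_⟩
        rw [Units.smul_def, Units.val_mul, mul_smul, ← h, ← mul_smul]
        simp
      subst hpp'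
      have hcd : (c : F) = (d : F) := by
        have h2 : ((c : F) - (d : F)) • p.rep = 0 := by
          rw [sub_smul, h, sub_self]
        rcases smul_eq_zero.1 h2 with h3 | h3
        · exact sub_eq_zero.1 h3
        · exact absurd h3 p.rep_nonzero
      simp [Prod.ext_iff, Subtype.ext_iff, Units.ext_iff, hcd]
    have hle := Nat.card_le_card_of_injective _ hf
    rw [Nat.card_prod, Nat.card_eq_fintype_card (α := Fˣ), Fintype.card_units,
      card_ker_ne (Fin (m + 1) → F) φ0 hφ0, hfinrankV, Nat.add_sub_cancel, hq] at hle
    exact hle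
  -- final arithmetic
  have haq : a * (q - 1) ≤ q ^ m - 1 :=
    le_trans (Nat.mul_le_mul_right _ haH) hinj
  have hqm : q ≤ q ^ m := by
    calc q = q ^ 1 := (pow_one q).symm
    _ ≤ q ^ m := Nat.pow_le_pow_right (by omega) hm
  have hsplit : q ^ (m + 1) - 1 = q * (q ^ m - 1) + (q - 1) := by
    have h1 : q ^ (m + 1) = q * q ^ m := by ring
    have h2 : q * q ^ m = q * (q ^ m - 1) + q := by
      have h3 : q ^ m = (q ^ m - 1) + 1 := by omega
      rw [h3, Nat.add_sub_cancel]
      ring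
    omega
  have key : S.toFinset.card * (q ^ m - 1) ≤ (a * q + 1) * (q ^ m - 1) := by
    calc S.toFinset.card * (q ^ m - 1) ≤ (q ^ (m + 1) - 1) * a := by omega
    _ = (q * (q ^ m - 1) + (q - 1)) * a := by rw [hsplit]
    _ = a * q * (q ^ m - 1) + a * (q - 1) := by ring
    _ ≤ a * q * (q ^ m - 1) + (q ^ m - 1) := by omega
    _ = (a * q + 1) * (q ^ m - 1) := by ring
  have hpos : 0 < q ^ m - 1 := by omega
  rw [hS]
  exact Nat.le_of_mul_le_mul_right key hpos
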